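/- Let φ be a smooth m×m complex-matrix-valued function of (x̄, t̄) ∈ ℝ² satisfying the constraint (φ_{x̄})² = φ_{x̄} and the equation φ_{t̄} = [φ_{x̄}, φ_{x̄x̄}]. Then: (i) φ_{x̄} φ_{x̄x̄} φ_{x̄} = 0; (ii) the matrix 𝒮 = 2 φ_{x̄} − I_m satisfies 𝒮² = I_m and the generalized Heisenberg magnet equation 2 𝒮_{t̄} = [𝒮, 𝒮_{x̄x̄}]; and (iii) φ satisfies the nonlinear part of the potential KP equation, ((φ_{x̄})²)_{x̄} − [φ_{x̄}, φ_{t̄}] = 0. -/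

import Mathlib

/-!
Differentiating the constraint `φₓ² = φₓ` in `x` gives `φₓₓ = φₓₓ φₓ + φₓ φₓₓ`. Sandwiching this
between two factors `φₓ` yields `φₓ φₓₓ φₓ = 2 φₓ φₓₓ φₓ`, which is (i), and then
`[φₓ, [φₓ, φₓₓ]] = φₓₓ = (φₓ²)ₓ`, which is (iii) since `φₜ = [φₓ, φₓₓ]`. For any idempotent `p`,
`2p - 1` is an involution, so `𝒮² = 1`. For the magnet equation, symmetry of mixed partials gives
`φₓₜ = [φₓ, φₓₓ]ₓ = [φₓ, φₓₓₓ]`, so both sides of `2𝒮ₜ = [𝒮, 𝒮ₓₓ]` equal `4 [φₓ, φₓₓₓ]`.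
-/

open Matrix

noncomputable section

/-- Entrywise partial derivative with respect to the first variable. -/
def pd1 {α β : Type*} (M : ℝ → ℝ → Matrix α β ℂ) : ℝ → ℝ → Matrix α β ℂ :=
  fun x t => Matrix.of fun i j => deriv (fun x' => M x' t i j) x

/-- Entrywise partial derivative with respect to the second variable. -/
def pd2 {α β : Type*} (M : ℝ → ℝ → Matrix α β ℂ) : ℝ → ℝ → Matrix α β ℂ :=
  fun x t => Matrix.of fun i j => deriv (fun t' => M x t' i j) t

/-- Entrywise smoothness of a matrix-valued function on ℝ². -/
def MSmooth {α β : Type*} (M : ℝ → ℝ → Matrix α β ℂ) : Prop :=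
  ∀ i j, ContDiff ℝ (⊤ : ℕ∞) fun v : ℝ × ℝ => M v.1 v.2 i j

section PartialDerivatives

variable {E F : Type*} [NormedAddCommGroup E] [NormedSpace ℝ E]
  [NormedAddCommGroup F] [NormedSpace ℝ F]

lemma hasDerivAt_partial_fst {g : ℝ × ℝ → F} {x t : ℝ} (hg : DifferentiableAt ℝ g (x, t)) :
    HasDerivAt (fun x' => g (x', t)) (fderiv ℝ g (x, t) (1, 0)) x :=
  hg.hasFDerivAt.comp_hasDerivAt x ((hasDerivAt_id x).prodMk (hasDerivAt_const x t))

lemma hasDerivAt_partial_snd {g : ℝ × ℝ → F} {x t : ℝ} (hg : DifferentiableAt ℝ g (x, t)) :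
    HasDerivAt (fun t' => g (x, t')) (fderiv ℝ g (x, t) (0, 1)) t :=
  hg.hasFDerivAt.comp_hasDerivAt t ((hasDerivAt_const t x).prodMk (hasDerivAt_id t))

lemma fderiv_fderiv_apply_comm {f : E → F} (hf : ContDiff ℝ 2 f) (p u w : E) :
    fderiv ℝ (fun v => fderiv ℝ f v u) p w = fderiv ℝ (fun v => fderiv ℝ f v w) p u := by
  have hf' : Differentiable ℝ (fderiv ℝ f) := (hf.fderiv_right le_rfl).differentiable one_ne_zero
  rw [fderiv_clm_apply (hf' p) (differentiableAt_const u),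
    fderiv_clm_apply (hf' p) (differentiableAt_const w)]
  simpa using (hf.contDiffAt.isSymmSndFDerivAt (by simp)) w u

end PartialDerivatives

section MatrixCalculus

variable {α β : Type*} {M : ℝ → ℝ → Matrix α β ℂ}

lemma MSmooth.differentiable (hM : MSmooth M) (i : α) (j : β) :
    Differentiable ℝ fun v : ℝ × ℝ => M v.1 v.2 i j :=
  (hM i j).differentiable (by simp)

lemma pd1_apply_eq_fderiv (hM : MSmooth M) (x t : ℝ) (i : α) (j : β) :
    pd1 M x t i j = fderiv ℝ (fun v : ℝ × ℝ => M v.1 v.2 i j) (x, t) (1, 0) :=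
  (hasDerivAt_partial_fst (hM.differentiable i j _)).deriv

lemma pd2_apply_eq_fderiv (hM : MSmooth M) (x t : ℝ) (i : α) (j : β) :
    pd2 M x t i j = fderiv ℝ (fun v : ℝ × ℝ => M v.1 v.2 i j) (x, t) (0, 1) :=
  (hasDerivAt_partial_snd (hM.differentiable i j _)).deriv

lemma MSmooth.contDiff_fderiv_apply (hM : MSmooth M) (i : α) (j : β) (u : ℝ × ℝ) :
    ContDiff ℝ (⊤ : ℕ∞) fun v => fderiv ℝ (fun w : ℝ × ℝ => M w.1 w.2 i j) v u :=
  ((hM i j).fderiv_right (by exact_mod_cast le_top)).clm_apply contDiff_const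

lemma MSmooth.pd1 (hM : MSmooth M) : MSmooth (pd1 M) := by
  intro i j
  simp_rw [pd1_apply_eq_fderiv hM]
  exact hM.contDiff_fderiv_apply i j _

lemma pd2_pd1_eq_pd1_pd2 (hM : MSmooth M) : pd2 (pd1 M) = pd1 (pd2 M) := by
  ext x t i j
  have hsmooth := hM.contDiff_fderiv_apply i j
  change deriv (fun t' => pd1 M x t' i j) t = deriv (fun x' => pd2 M x' t i j) x
  simp_rw [pd1_apply_eq_fderiv hM, pd2_apply_eq_fderiv hM]
  rw [(hasDerivAt_partial_snd ((hsmooth _).differentiable (by simp) _)).deriv,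
    (hasDerivAt_partial_fst ((hsmooth _).differentiable (by simp) _)).deriv]
  exact fderiv_fderiv_apply_comm ((hM i j).of_le (by norm_cast)) _ _ _

lemma hasDerivAt_pd1 (hM : MSmooth M) (x t : ℝ) (i : α) (j : β) :
    HasDerivAt (fun x' => M x' t i j) (pd1 M x t i j) x := by
  rw [pd1_apply_eq_fderiv hM]
  exact hasDerivAt_partial_fst (hM.differentiable i j _)

lemma pd1_const_smul (c : ℂ) : pd1 (fun x t => c • M x t) = fun x t => c • pd1 M x t := by
  ext x t i j
  exact deriv_const_mul_field c

lemma pd2_const_smul (c : ℂ) : pd2 (fun x t => c • M x t) = fun x t => c • pd2 M x t := by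
  ext x t i j
  exact deriv_const_mul_field c

lemma pd1_sub_const (C : Matrix α β ℂ) : pd1 (fun x t => M x t - C) = pd1 M := by
  ext x t i j
  exact deriv_sub_const (C i j)

lemma pd2_sub_const (C : Matrix α β ℂ) : pd2 (fun x t => M x t - C) = pd2 M := by
  ext x t i j
  exact deriv_sub_const (C i j)

lemma pd1_sub {N : ℝ → ℝ → Matrix α β ℂ} (hM : MSmooth M) (hN : MSmooth N) (x t : ℝ) :
    pd1 (fun x t => M x t - N x t) x t = pd1 M x t - pd1 N x t := by
  ext i j
  exact ((hasDerivAt_pd1 hM x t i j).sub (hasDerivAt_pd1 hN x t i j)).deriv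

section Mul

variable {γ : Type*} [Fintype β] {N : ℝ → ℝ → Matrix β γ ℂ}

lemma MSmooth.mul (hM : MSmooth M) (hN : MSmooth N) : MSmooth fun x t => M x t * N x t :=
  fun i j => by
    simp only [Matrix.mul_apply]
    exact ContDiff.sum fun k _ => (hM i k).mul (hN k j)

lemma pd1_mul (hM : MSmooth M) (hN : MSmooth N) (x t : ℝ) :
    pd1 (fun x t => M x t * N x t) x t = pd1 M x t * N x t + M x t * pd1 N x t := by
  ext i j
  have h := HasDerivAt.fun_sum fun k (_ : k ∈ Finset.univ) =>
    (hasDerivAt_pd1 hM x t i k).mul (hasDerivAt_pd1 hN x t k j)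
  simpa [pd1, Matrix.mul_apply, Finset.sum_add_distrib] using h.deriv

end Mul

section Square

variable {n : Type*} [Fintype n] {P : ℝ → ℝ → Matrix n n ℂ}

lemma pd1_commutator_pd1 (hP : MSmooth P) (x t : ℝ) :
    pd1 (fun x t => P x t * pd1 P x t - pd1 P x t * P x t) x t
      = P x t * pd1 (pd1 P) x t - pd1 (pd1 P) x t * P x t := by
  rw [pd1_sub (hP.mul hP.pd1) (hP.pd1.mul hP), pd1_mul hP hP.pd1, pd1_mul hP.pd1 hP]
  abel

lemma pd1_eq_pd1_mul_add_mul_pd1 (hP : MSmooth P) (hidem : ∀ x t, IsIdempotentElem (P x t))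
    (x t : ℝ) : pd1 P x t = pd1 P x t * P x t + P x t * pd1 P x t := by
  conv_lhs => rw [← funext₂ hidem]
  exact pd1_mul hP hP x t

end Square

end MatrixCalculus

section Idempotent

variable {R : Type*} [Ring R] {p q : R}

lemma IsIdempotentElem.mul_mul_eq_zero (hp : IsIdempotentElem p) (hq : q = q * p + p * q) :
    p * q * p = 0 := by
  have : p * q * p = p * q * p + p * q * p :=
    calc p * q * p = p * (q * p + p * q) * p := by rw [← hq]
      _ = p * q * (p * p) + (p * p) * q * p := by noncomm_ring
      _ = p * q * p + p * q * p := by rw [hp.eq, mul_assoc]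
  exact left_eq_add.mp this

lemma IsIdempotentElem.lie_lie_eq (hp : IsIdempotentElem p) (hq : q = q * p + p * q) :
    ⁅p, ⁅p, q⁆⁆ = q :=
  calc ⁅p, ⁅p, q⁆⁆ = (p * p) * q + q * (p * p) - (p * q * p + p * q * p) := by
        simp only [Ring.lie_def]; noncomm_ring
    _ = q := by rw [hp.eq, hp.mul_mul_eq_zero hq, add_zero, sub_zero, add_comm, ← hq]

lemma IsIdempotentElem.two_smul_sub_one_mul_self {K : Type*} [CommRing K] [Algebra K R]
    (hp : IsIdempotentElem p) : ((2 : K) • p - 1) * ((2 : K) • p - 1) = 1 := by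
  simp only [sub_mul, mul_sub, smul_mul_assoc, mul_smul_comm, hp.eq, one_mul, mul_one]
  module

end Idempotent

theorem statement8_general (m : ℕ)
    (φ : ℝ → ℝ → Matrix (Fin m) (Fin m) ℂ)
    (hφ : MSmooth φ)
    (hconstraint : ∀ x t : ℝ, pd1 φ x t * pd1 φ x t = pd1 φ x t)
    (heq : ∀ x t : ℝ,
      pd2 φ x t = pd1 φ x t * pd1 (pd1 φ) x t - pd1 (pd1 φ) x t * pd1 φ x t)
    (𝒮 : ℝ → ℝ → Matrix (Fin m) (Fin m) ℂ)
    (h𝒮 : 𝒮 = fun x t => (2 : ℂ) • pd1 φ x t - 1) :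
    (∀ x t : ℝ, pd1 φ x t * pd1 (pd1 φ) x t * pd1 φ x t = 0) ∧
    (∀ x t : ℝ, 𝒮 x t * 𝒮 x t = 1) ∧
    (∀ x t : ℝ,
      (2 : ℂ) • pd2 𝒮 x t = 𝒮 x t * pd1 (pd1 𝒮) x t - pd1 (pd1 𝒮) x t * 𝒮 x t) ∧
    (∀ x t : ℝ,
      pd1 (fun x t => pd1 φ x t * pd1 φ x t) x t
        - (pd1 φ x t * pd2 φ x t - pd2 φ x t * pd1 φ x t) = 0) := by
  have hidem : ∀ x t, IsIdempotentElem (pd1 φ x t) := hconstraint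
  have hφxx := pd1_eq_pd1_mul_add_mul_pd1 hφ.pd1 hidem
  have h𝒮x : pd1 𝒮 = fun x t => (2 : ℂ) • pd1 (pd1 φ) x t := by
    rw [h𝒮, pd1_sub_const, pd1_const_smul]
  have h𝒮t : pd2 𝒮 = fun x t => (2 : ℂ) • pd2 (pd1 φ) x t := by
    rw [h𝒮, pd2_sub_const, pd2_const_smul]
  have hφxt (x t : ℝ) : pd2 (pd1 φ) x t
      = pd1 φ x t * pd1 (pd1 (pd1 φ)) x t - pd1 (pd1 (pd1 φ)) x t * pd1 φ x t := by
    rw [pd2_pd1_eq_pd1_pd2 hφ, funext₂ heq, pd1_commutator_pd1 hφ.pd1]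
  refine ⟨fun x t => (hidem x t).mul_mul_eq_zero (hφxx x t),
    fun x t => h𝒮 ▸ (hidem x t).two_smul_sub_one_mul_self, fun x t => ?_, fun x t => ?_⟩
  · simp only [h𝒮t, h𝒮x, pd1_const_smul, hφxt]
    rw [h𝒮]
    simp only [sub_mul, mul_sub, smul_mul_assoc, mul_smul_comm, one_mul, mul_one]
    module
  · have hlie := (hidem x t).lie_lie_eq (hφxx x t)
    rw [Ring.lie_def, Ring.lie_def, ← heq] at hlie
    rw [funext₂ hconstraint, hlie, sub_self]

theorem statement8 (m : ℕ) (hm : 0 < m)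
    (φ : ℝ → ℝ → Matrix (Fin m) (Fin m) ℂ)
    (hφ : MSmooth φ)
    (hconstraint : ∀ x t : ℝ, pd1 φ x t * pd1 φ x t = pd1 φ x t)
    (heq : ∀ x t : ℝ,
      pd2 φ x t = pd1 φ x t * pd1 (pd1 φ) x t - pd1 (pd1 φ) x t * pd1 φ x t)
    (𝒮 : ℝ → ℝ → Matrix (Fin m) (Fin m) ℂ)
    (h𝒮 : 𝒮 = fun x t => (2 : ℂ) • pd1 φ x t - 1) :
    (∀ x t : ℝ, pd1 φ x t * pd1 (pd1 φ) x t * pd1 φ x t = 0) ∧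
    (∀ x t : ℝ, 𝒮 x t * 𝒮 x t = 1) ∧
    (∀ x t : ℝ,
      (2 : ℂ) • pd2 𝒮 x t = 𝒮 x t * pd1 (pd1 𝒮) x t - pd1 (pd1 𝒮) x t * 𝒮 x t) ∧
    (∀ x t : ℝ,
      pd1 (fun x t => pd1 φ x t * pd1 φ x t) x t
        - (pd1 φ x t * pd2 φ x t - pd2 φ x t * pd1 φ x t) = 0) :=
  statement8_general m φ hφ hconstraint heq 𝒮 h𝒮
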